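/- In the tensor product of two typical irreducible g̃l(1|1)-Verma modules with ẽ₁+ẽ₂ ≠ 0, the vector χ = ẽ₁ v⊗ψ̃⁻w − ẽ₂ ψ̃⁻v⊗w is a singular vector (annihilated by ψ⁺ and ψ̃⁺ and an eigenvector of N, E, Ñ, Ẽ), and the vector λ = ẽ₂ ψ⁻v⊗w − ẽ₁ v⊗ψ⁻w + e₂ ψ̃⁻v⊗w − e₁ v⊗ψ̃⁻w satisfies ψ⁺λ = ψ̃⁺λ = 0 and Ñλ = (ñ₁+ñ₂)λ + χ. -/
import Mathlib


open Matrix TensorProduct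

namespace TypTensor

/-- The carrier of the 4-dimensional typical irreducible Verma module of the Takiff
superalgebra of `gl(1|1)`, with basis `(v, ψ⁻v, ψ̃⁻v, ψ̃⁻ψ⁻v)`. -/
abbrev W : Type := Fin 4 → ℂ

/- Matrices of the generators on the Verma module of highest weight `(n, e, ñ, ẽ)`
in the basis `(v, ψ⁻v, ψ̃⁻v, ψ̃⁻ψ⁻v)`, derived from the `g̃l(1|1)` relations. -/
noncomputable def VN (n : ℂ) : Matrix (Fin 4) (Fin 4) ℂ :=
  !![n, 0, 0, 0; 0, n - 1, 0, 0; 0, 0, n - 1, 0; 0, 0, 0, n - 2]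
noncomputable def VE (e : ℂ) : Matrix (Fin 4) (Fin 4) ℂ := e • 1
noncomputable def VNt (nt : ℂ) : Matrix (Fin 4) (Fin 4) ℂ :=
  !![nt, 0, 0, 0; 0, nt, 0, 0; 0, -1, nt, 0; 0, 0, 0, nt]
noncomputable def VEt (et : ℂ) : Matrix (Fin 4) (Fin 4) ℂ := et • 1
noncomputable def Vpp (e et : ℂ) : Matrix (Fin 4) (Fin 4) ℂ :=
  !![0, e, et, 0; 0, 0, 0, et; 0, 0, 0, -e; 0, 0, 0, 0]
noncomputable def Vpm : Matrix (Fin 4) (Fin 4) ℂ :=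
  !![0, 0, 0, 0; 1, 0, 0, 0; 0, 0, 0, 0; 0, 0, -1, 0]
noncomputable def Vtp (et : ℂ) : Matrix (Fin 4) (Fin 4) ℂ :=
  !![0, et, 0, 0; 0, 0, 0, 0; 0, 0, 0, -et; 0, 0, 0, 0]
noncomputable def Vtm : Matrix (Fin 4) (Fin 4) ℂ :=
  !![0, 0, 0, 0; 0, 0, 0, 0; 1, 0, 0, 0; 0, 1, 0, 0]
/-- Parity operator: `v, ψ̃⁻ψ⁻v` even, `ψ⁻v, ψ̃⁻v` odd. -/
noncomputable def VP : Matrix (Fin 4) (Fin 4) ℂ :=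
  !![1, 0, 0, 0; 0, -1, 0, 0; 0, 0, -1, 0; 0, 0, 0, 1]

/-- The highest weight vector `v`. -/
noncomputable def hwv : W := Pi.single 0 1

variable (n1 e1 nt1 et1 n2 e2 nt2 et2 : ℂ)

/- The coproduct (graded tensor product) action with Koszul signs on the tensor
product of the Verma modules of highest weights `(n₁,e₁,ñ₁,ẽ₁)` and `(n₂,e₂,ñ₂,ẽ₂)`. -/
noncomputable def ΔN : W ⊗[ℂ] W →ₗ[ℂ] W ⊗[ℂ] W :=
  TensorProduct.map (toLin' (VN n1)) LinearMap.id +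
    TensorProduct.map LinearMap.id (toLin' (VN n2))
noncomputable def ΔE : W ⊗[ℂ] W →ₗ[ℂ] W ⊗[ℂ] W :=
  TensorProduct.map (toLin' (VE e1)) LinearMap.id +
    TensorProduct.map LinearMap.id (toLin' (VE e2))
noncomputable def ΔNt : W ⊗[ℂ] W →ₗ[ℂ] W ⊗[ℂ] W :=
  TensorProduct.map (toLin' (VNt nt1)) LinearMap.id +
    TensorProduct.map LinearMap.id (toLin' (VNt nt2))
noncomputable def ΔEt : W ⊗[ℂ] W →ₗ[ℂ] W ⊗[ℂ] W :=
  TensorProduct.map (toLin' (VEt et1)) LinearMap.id +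
    TensorProduct.map LinearMap.id (toLin' (VEt et2))
noncomputable def Δpp : W ⊗[ℂ] W →ₗ[ℂ] W ⊗[ℂ] W :=
  TensorProduct.map (toLin' (Vpp e1 et1)) LinearMap.id +
    TensorProduct.map (toLin' VP) (toLin' (Vpp e2 et2))
noncomputable def Δpm : W ⊗[ℂ] W →ₗ[ℂ] W ⊗[ℂ] W :=
  TensorProduct.map (toLin' Vpm) LinearMap.id +
    TensorProduct.map (toLin' VP) (toLin' Vpm)
noncomputable def Δtp : W ⊗[ℂ] W →ₗ[ℂ] W ⊗[ℂ] W :=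
  TensorProduct.map (toLin' (Vtp et1)) LinearMap.id +
    TensorProduct.map (toLin' VP) (toLin' (Vtp et2))
noncomputable def Δtm : W ⊗[ℂ] W →ₗ[ℂ] W ⊗[ℂ] W :=
  TensorProduct.map (toLin' Vtm) LinearMap.id +
    TensorProduct.map (toLin' VP) (toLin' Vtm)

/-- The singular vector `χ = ẽ₁ v ⊗ ψ̃⁻w − ẽ₂ ψ̃⁻v ⊗ w`. -/
noncomputable def χ : W ⊗[ℂ] W :=
  et1 • (hwv ⊗ₜ[ℂ] toLin' Vtm hwv) - et2 • (toLin' Vtm hwv ⊗ₜ[ℂ] hwv)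

/-- The generalised singular vector
`λ = ẽ₂ ψ⁻v ⊗ w − ẽ₁ v ⊗ ψ⁻w + e₂ ψ̃⁻v ⊗ w − e₁ v ⊗ ψ̃⁻w`. -/
noncomputable def lam : W ⊗[ℂ] W :=
  et2 • (toLin' Vpm hwv ⊗ₜ[ℂ] hwv) - et1 • (hwv ⊗ₜ[ℂ] toLin' Vpm hwv) +
    e2 • (toLin' Vtm hwv ⊗ₜ[ℂ] hwv) - e1 • (hwv ⊗ₜ[ℂ] toLin' Vtm hwv)

end TypTensor

namespace TypTensor

private lemma tl4 (M : Matrix (Fin 4) (Fin 4) ℂ) (j : Fin 4) :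
    toLin' M (Pi.single j 1 : W) = fun i => M i j := by
  funext i; simp [Matrix.toLin'_apply, Matrix.mulVec_single]

noncomputable abbrev s0 : W := Pi.single 0 1
noncomputable abbrev s1 : W := Pi.single 1 1
noncomputable abbrev s2 : W := Pi.single 2 1

lemma hwv_eq : hwv = s0 := rfl

lemma Vtm0 : toLin' Vtm s0 = s2 := by
  rw [tl4]; funext i; fin_cases i <;> simp [Vtm, Pi.single_apply, Matrix.vecHead, Matrix.vecTail]
lemma Vpm0 : toLin' Vpm s0 = s1 := by
  rw [tl4]; funext i; fin_cases i <;> simp [Vpm, Pi.single_apply, Matrix.vecHead, Matrix.vecTail]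
lemma VP0 : toLin' VP s0 = s0 := by
  rw [tl4]; funext i; fin_cases i <;> simp [VP, Pi.single_apply, Matrix.vecHead, Matrix.vecTail]
lemma VP1 : toLin' VP s1 = -s1 := by
  rw [tl4]; funext i; fin_cases i <;> simp [VP, Pi.single_apply, Matrix.vecHead, Matrix.vecTail]
lemma VP2 : toLin' VP s2 = -s2 := by
  rw [tl4]; funext i; fin_cases i <;> simp [VP, Pi.single_apply, Matrix.vecHead, Matrix.vecTail]
lemma Vpp0 (e et : ℂ) : toLin' (Vpp e et) s0 = 0 := by
  rw [tl4]; funext i; fin_cases i <;> simp [Vpp, Pi.single_apply, Matrix.vecHead, Matrix.vecTail]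
lemma Vpp1 (e et : ℂ) : toLin' (Vpp e et) s1 = e • s0 := by
  rw [tl4]; funext i; fin_cases i <;> simp [Vpp, Pi.single_apply, Matrix.vecHead, Matrix.vecTail]
lemma Vpp2 (e et : ℂ) : toLin' (Vpp e et) s2 = et • s0 := by
  rw [tl4]; funext i; fin_cases i <;> simp [Vpp, Pi.single_apply, Matrix.vecHead, Matrix.vecTail]
lemma Vtp0 (et : ℂ) : toLin' (Vtp et) s0 = 0 := by
  rw [tl4]; funext i; fin_cases i <;> simp [Vtp, Pi.single_apply, Matrix.vecHead, Matrix.vecTail]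
lemma Vtp1 (et : ℂ) : toLin' (Vtp et) s1 = et • s0 := by
  rw [tl4]; funext i; fin_cases i <;> simp [Vtp, Pi.single_apply, Matrix.vecHead, Matrix.vecTail]
lemma Vtp2 (et : ℂ) : toLin' (Vtp et) s2 = 0 := by
  rw [tl4]; funext i; fin_cases i <;> simp [Vtp, Pi.single_apply, Matrix.vecHead, Matrix.vecTail]
lemma VN0 (n : ℂ) : toLin' (VN n) s0 = n • s0 := by
  rw [tl4]; funext i; fin_cases i <;> simp [VN, Pi.single_apply, Matrix.vecHead, Matrix.vecTail]
lemma VN1 (n : ℂ) : toLin' (VN n) s1 = (n - 1) • s1 := by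
  rw [tl4]; funext i; fin_cases i <;> simp [VN, Pi.single_apply, Matrix.vecHead, Matrix.vecTail]
lemma VN2 (n : ℂ) : toLin' (VN n) s2 = (n - 1) • s2 := by
  rw [tl4]; funext i; fin_cases i <;> simp [VN, Pi.single_apply, Matrix.vecHead, Matrix.vecTail]
lemma VNt0 (nt : ℂ) : toLin' (VNt nt) s0 = nt • s0 := by
  rw [tl4]; funext i; fin_cases i <;> simp [VNt, Pi.single_apply, Matrix.vecHead, Matrix.vecTail]
lemma VNt1 (nt : ℂ) : toLin' (VNt nt) s1 = nt • s1 - s2 := by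
  rw [tl4]; funext i; fin_cases i <;> simp [VNt, Pi.single_apply, Matrix.vecHead, Matrix.vecTail]
lemma VNt2 (nt : ℂ) : toLin' (VNt nt) s2 = nt • s2 := by
  rw [tl4]; funext i; fin_cases i <;> simp [VNt, Pi.single_apply, Matrix.vecHead, Matrix.vecTail]
lemma VEx (e : ℂ) (x : W) : toLin' (VE e) x = e • x := by
  simp [VE, Matrix.toLin'_apply, Matrix.smul_mulVec, Matrix.one_mulVec]
lemma VEtx (et : ℂ) (x : W) : toLin' (VEt et) x = et • x := by
  simp [VEt, Matrix.toLin'_apply, Matrix.smul_mulVec, Matrix.one_mulVec]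

end TypTensor

open TypTensor in
/-- In the tensor product of two typical irreducible `g̃l(1|1)`-Verma modules with
`ẽ₁ + ẽ₂ ≠ 0`, the vector `χ = ẽ₁ v⊗ψ̃⁻w − ẽ₂ ψ̃⁻v⊗w` is a singular vector (annihilated
by `ψ⁺` and `ψ̃⁺` and an eigenvector of `N, E, Ñ, Ẽ`), and the vector
`λ = ẽ₂ ψ⁻v⊗w − ẽ₁ v⊗ψ⁻w + e₂ ψ̃⁻v⊗w − e₁ v⊗ψ̃⁻w` satisfies `ψ⁺λ = ψ̃⁺λ = 0` and
`Ñλ = (ñ₁+ñ₂)λ + χ`. -/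
theorem typical_tensor_singular_vectors (n1 e1 nt1 et1 n2 e2 nt2 et2 : ℂ)
    (het1 : et1 ≠ 0) (het2 : et2 ≠ 0) (het : et1 + et2 ≠ 0) :
    Δpp e1 et1 e2 et2 (χ et1 et2) = 0 ∧
    Δtp et1 et2 (χ et1 et2) = 0 ∧
    ΔN n1 n2 (χ et1 et2) = (n1 + n2 - 1) • χ et1 et2 ∧
    ΔE e1 e2 (χ et1 et2) = (e1 + e2) • χ et1 et2 ∧
    ΔNt nt1 nt2 (χ et1 et2) = (nt1 + nt2) • χ et1 et2 ∧
    ΔEt et1 et2 (χ et1 et2) = (et1 + et2) • χ et1 et2 ∧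
    Δpp e1 et1 e2 et2 (lam e1 et1 e2 et2) = 0 ∧
    Δtp et1 et2 (lam e1 et1 e2 et2) = 0 ∧
    ΔNt nt1 nt2 (lam e1 et1 e2 et2) = (nt1 + nt2) • lam e1 et1 e2 et2 + χ et1 et2 := by
  refine ⟨?_, ?_, ?_, ?_, ?_, ?_, ?_, ?_, ?_⟩ <;>
  · simp only [Δpp, Δtp, ΔN, ΔE, ΔNt, ΔEt, χ, lam, hwv_eq, Vtm0, Vpm0,
      LinearMap.add_apply, map_add, map_sub, _root_.map_smul, TensorProduct.map_tmul,
      LinearMap.id_coe, id_eq, VP0, VP1, VP2, Vpp0, Vpp1, Vpp2, Vtp0, Vtp1, Vtp2,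
      VN0, VN1, VN2, VNt0, VNt1, VNt2, VEx, VEtx,
      ← TensorProduct.smul_tmul', TensorProduct.tmul_smul, TensorProduct.sub_tmul,
      TensorProduct.tmul_sub, TensorProduct.neg_tmul, TensorProduct.tmul_neg,
      TensorProduct.zero_tmul, TensorProduct.tmul_zero, smul_smul, smul_zero, add_zero, zero_add, smul_neg]
    module
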